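/- Under the diminishing learning-rate assumptions, lim_{K→∞} RE(X̄^K, X̄^{K+1}) = 0, and consequently lim_{K→∞} ‖X̄^{K+1} − X̄^K‖ = 0 in the Euclidean norm. -/

import Mathlib

open Filter Topology Finset Matrix

noncomputable section

/-- Membership in the probability simplex Δ ⊆ ℝ^n. -/
def isSimplex {n : ℕ} (X : Fin n → ℝ) : Prop :=
  (∀ i, 0 ≤ X i) ∧ ∑ i, X i = 1

/-- Interior point of the probability simplex. -/
def isInteriorPt {n : ℕ} (X : Fin n → ℝ) : Prop :=
  (∀ i, 0 < X i) ∧ ∑ i, X i = 1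

/-- The Hedge map T_α. -/
noncomputable def hedge {n : ℕ} (C : Matrix (Fin n) (Fin n) ℝ) (a : ℝ) (X : Fin n → ℝ) :
    Fin n → ℝ :=
  fun i => X i * Real.exp (a * C.mulVec X i) / ∑ j, X j * Real.exp (a * C.mulVec X j)

/-- Hedge iterates: X^0 = X0, X^{k+1} = T_{α_k}(X^k). -/
noncomputable def hiter {n : ℕ} (C : Matrix (Fin n) (Fin n) ℝ) (a : ℕ → ℝ) (X0 : Fin n → ℝ) :
    ℕ → Fin n → ℝ
  | 0 => X0
  | k + 1 => hedge C (a k) (hiter C a X0 k)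

/-- A_K = ∑_{k=0}^K α_k. -/
noncomputable def pSum (a : ℕ → ℝ) (K : ℕ) : ℝ := ∑ k ∈ Finset.range (K + 1), a k

/-- Weighted empirical average X̄^K = (1/A_K) ∑_{k=0}^K α_k X^k. -/
noncomputable def wavg {n : ℕ} (C : Matrix (Fin n) (Fin n) ℝ) (a : ℕ → ℝ) (X0 : Fin n → ℝ)
    (K : ℕ) : Fin n → ℝ :=
  (pSum a K)⁻¹ • ∑ k ∈ Finset.range (K + 1), a k • hiter C a X0 k

/-- Relative entropy RE(Y, X) = ∑_{i : Y(i) > 0} Y(i) ln(Y(i)/X(i)). -/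
noncomputable def RE {n : ℕ} (Y X : Fin n → ℝ) : ℝ :=
  ∑ i ∈ Finset.univ.filter (fun i => 0 < Y i), Y i * Real.log (Y i / X i)

/-- (CX)_max = max_i (CX)_i. -/
noncomputable def cmax {n : ℕ} (C : Matrix (Fin n) (Fin n) ℝ) (X : Fin n → ℝ) : ℝ :=
  ⨆ i, C.mulVec X i

/-- X̄ is a limit point of the sequence of weighted empirical averages. -/
def isLimitPoint {n : ℕ} (C : Matrix (Fin n) (Fin n) ℝ) (a : ℕ → ℝ) (X0 : Fin n → ℝ)
    (Xb : Fin n → ℝ) : Prop :=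
  ∃ φ : ℕ → ℕ, StrictMono φ ∧ Tendsto (fun j => wavg C a X0 (φ j)) atTop (𝓝 Xb)

/-!
The new average is a convex combination of the old one and the newest iterate:
`X̄^{K+1} = (1 - λ_K) X̄^K + λ_K X^{K+1}` with `λ_K = α_{K+1} / A_{K+1}`, and `λ_K → 0` because
`α_k → 0` while `A_K → ∞`. Hence `X̄^{K+1} ≥ (1 - λ_K) X̄^K` coordinatewise, which bounds
`RE(X̄^K, X̄^{K+1})` by `-log (1 - λ_K)`, and `X̄^{K+1} - X̄^K = λ_K (X^{K+1} - X̄^K)` has Euclidean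
norm at most `λ_K √2`.
-/

open Filter Topology Finset

section Simplex

variable {n : ℕ}

lemma isInteriorPt.isSimplex {X : Fin n → ℝ} (hX : isInteriorPt X) : isSimplex X :=
  ⟨fun i => (hX.1 i).le, hX.2⟩

lemma isSimplex.le_one {X : Fin n → ℝ} (hX : isSimplex X) (i : Fin n) : X i ≤ 1 :=
  hX.2 ▸ single_le_sum (fun j _ => hX.1 j) (mem_univ i)

lemma isSimplex.sum_filter_pos {X : Fin n → ℝ} (hX : isSimplex X) :
    ∑ i ∈ univ.filter (fun i => 0 < X i), X i = 1 := by
  rw [sum_filter_of_ne fun i _ hi => (hX.1 i).lt_of_ne' hi, hX.2]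

lemma isSimplex.sum_sq_sub_le_two {X Y : Fin n → ℝ} (hX : isSimplex X) (hY : isSimplex Y) :
    ∑ i, (X i - Y i) ^ 2 ≤ 2 :=
  calc ∑ i, (X i - Y i) ^ 2 ≤ ∑ i, (X i + Y i) :=
        sum_le_sum fun i _ => by nlinarith [hX.1 i, hY.1 i, hX.le_one i, hY.le_one i]
    _ = 2 := by rw [sum_add_distrib, hX.2, hY.2]; norm_num

lemma isInteriorPt.hedge {X : Fin n → ℝ} (hX : isInteriorPt X) (C : Matrix (Fin n) (Fin n) ℝ)
    (α : ℝ) : isInteriorPt (hedge C α X) := by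
  have hne : (univ : Finset (Fin n)).Nonempty :=
    nonempty_of_sum_ne_zero (hX.2 ▸ one_ne_zero)
  have hZ : ∀ i, 0 < X i * Real.exp (α * C.mulVec X i) := fun i =>
    mul_pos (hX.1 i) (Real.exp_pos _)
  have hden : 0 < ∑ j, X j * Real.exp (α * C.mulVec X j) := sum_pos (fun j _ => hZ j) hne
  exact ⟨fun i => div_pos (hZ i) hden, by
    simp only [_root_.hedge]
    rw [← sum_div, div_self hden.ne']⟩

lemma isInteriorPt.hiter {X0 : Fin n → ℝ} (hX0 : isInteriorPt X0)
    (C : Matrix (Fin n) (Fin n) ℝ) (a : ℕ → ℝ) (k : ℕ) : isInteriorPt (hiter C a X0 k) := by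
  induction k with
  | zero => exact hX0
  | succ k ih => exact ih.hedge C (a k)

end Simplex

section RelativeEntropy

variable {n : ℕ} {X Y : Fin n → ℝ}

lemma RE_nonneg (hY : isSimplex Y) (hX : isSimplex X) (hpos : ∀ i, 0 < Y i → 0 < X i) :
    0 ≤ RE Y X := by
  set s := univ.filter (fun i => 0 < Y i)
  have hterm : ∀ i ∈ s, Y i - X i ≤ Y i * Real.log (Y i / X i) := by
    intro i hi
    have hYi : 0 < Y i := (mem_filter.mp hi).2
    have hlog := Real.one_sub_inv_le_log_of_pos (div_pos hYi (hpos i hYi))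
    rw [inv_div] at hlog
    calc Y i - X i = Y i * (1 - X i / Y i) := by field_simp
      _ ≤ Y i * Real.log (Y i / X i) := mul_le_mul_of_nonneg_left hlog hYi.le
  have hXs : ∑ i ∈ s, X i ≤ ∑ i, X i :=
    sum_le_sum_of_subset_of_nonneg (filter_subset _ _) fun i _ _ => hX.1 i
  calc (0 : ℝ) = ∑ i ∈ s, Y i - ∑ i, X i := by rw [hY.sum_filter_pos, hX.2, sub_self]
    _ ≤ ∑ i ∈ s, (Y i - X i) := by rw [sum_sub_distrib]; linarith
    _ ≤ RE Y X := sum_le_sum hterm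

lemma RE_le_neg_log_of_mul_le {c : ℝ} (hY : isSimplex Y) (hc : 0 < c)
    (hYX : ∀ i, c * Y i ≤ X i) : RE Y X ≤ -Real.log c := by
  have hterm : ∀ i ∈ univ.filter (fun i => 0 < Y i),
      Y i * Real.log (Y i / X i) ≤ Y i * -Real.log c := by
    intro i hi
    have hYi : 0 < Y i := (mem_filter.mp hi).2
    have hXi : 0 < X i := (mul_pos hc hYi).trans_le (hYX i)
    refine mul_le_mul_of_nonneg_left ?_ hYi.le
    rw [← Real.log_inv]
    refine Real.log_le_log (div_pos hYi hXi) ?_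
    rw [div_le_iff₀ hXi]
    exact (le_inv_mul_iff₀ hc).mpr (hYX i)
  calc RE Y X ≤ ∑ i ∈ univ.filter (fun i => 0 < Y i), Y i * -Real.log c := sum_le_sum hterm
    _ = -Real.log c := by rw [← sum_mul, hY.sum_filter_pos, one_mul]

end RelativeEntropy

section WeightedAverage

variable {n : ℕ} (C : Matrix (Fin n) (Fin n) ℝ) {a : ℕ → ℝ} (X0 : Fin n → ℝ)

lemma pSum_pos (ha : ∀ k, 0 < a k) (K : ℕ) : 0 < pSum a K :=
  sum_pos (fun k _ => ha k) nonempty_range_add_one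

lemma pSum_succ (K : ℕ) : pSum a (K + 1) = pSum a K + a (K + 1) :=
  sum_range_succ a (K + 1)

lemma pSum_div_pSum_succ (ha : ∀ k, 0 < a k) (K : ℕ) :
    pSum a K / pSum a (K + 1) = 1 - a (K + 1) / pSum a (K + 1) := by
  rw [eq_sub_iff_add_eq, ← add_div, ← pSum_succ, div_self (pSum_pos ha (K + 1)).ne']

lemma wavg_succ (ha : ∀ k, 0 < a k) (K : ℕ) :
    wavg C a X0 (K + 1) = (pSum a (K + 1))⁻¹ •
      (pSum a K • wavg C a X0 K + a (K + 1) • hiter C a X0 (K + 1)) := by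
  rw [wavg, wavg, smul_inv_smul₀ (pSum_pos ha K).ne', sum_range_succ]

lemma wavg_isSimplex (ha : ∀ k, 0 < a k) (hX0 : isInteriorPt X0) (K : ℕ) :
    isSimplex (wavg C a X0 K) := by
  have hX := hX0.hiter C a
  refine ⟨fun i => ?_, ?_⟩
  · simp only [wavg, Pi.smul_apply, Finset.sum_apply, smul_eq_mul]
    exact mul_nonneg (inv_nonneg.mpr (pSum_pos ha K).le)
      (sum_nonneg fun k _ => mul_nonneg (ha k).le ((hX k).1 i).le)
  · simp only [wavg, Pi.smul_apply, Finset.sum_apply, smul_eq_mul, ← mul_sum]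
    rw [sum_comm]
    simp only [← mul_sum, (hX _).2, mul_one]
    exact inv_mul_cancel₀ (pSum_pos ha K).ne'

lemma mul_wavg_le_wavg_succ (ha : ∀ k, 0 < a k) (hX0 : isInteriorPt X0) (K : ℕ) (i : Fin n) :
    pSum a K / pSum a (K + 1) * wavg C a X0 K i ≤ wavg C a X0 (K + 1) i := by
  rw [wavg_succ C X0 ha]
  simp only [Pi.smul_apply, Pi.add_apply, smul_eq_mul]
  rw [div_mul_eq_mul_div, div_eq_inv_mul]
  gcongr
  · exact inv_nonneg.mpr (pSum_pos ha (K + 1)).le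
  · exact le_add_of_nonneg_right (mul_nonneg (ha _).le ((hX0.hiter C a (K + 1)).1 i).le)

lemma wavg_succ_sub_apply (ha : ∀ k, 0 < a k) (K : ℕ) (i : Fin n) :
    wavg C a X0 (K + 1) i - wavg C a X0 K i =
      a (K + 1) / pSum a (K + 1) * (hiter C a X0 (K + 1) i - wavg C a X0 K i) := by
  have hA := (pSum_pos ha (K + 1)).ne'
  rw [wavg_succ C X0 ha]
  simp only [Pi.smul_apply, Pi.add_apply, smul_eq_mul]
  rw [pSum_succ] at hA ⊢
  field_simp
  ring

lemma sqrt_sum_sq_wavg_succ_sub_le (ha : ∀ k, 0 < a k) (hX0 : isInteriorPt X0) (K : ℕ) :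
    Real.sqrt (∑ i, (wavg C a X0 (K + 1) i - wavg C a X0 K i) ^ 2) ≤
      a (K + 1) / pSum a (K + 1) * Real.sqrt 2 := by
  have hstep : 0 ≤ a (K + 1) / pSum a (K + 1) := (div_pos (ha _) (pSum_pos ha _)).le
  simp only [wavg_succ_sub_apply C X0 ha, mul_pow, ← mul_sum]
  rw [Real.sqrt_mul (sq_nonneg _), Real.sqrt_sq hstep]
  gcongr
  exact (hX0.hiter C a (K + 1)).isSimplex.sum_sq_sub_le_two (wavg_isSimplex C X0 ha hX0 K)

end WeightedAverage

theorem stmt18_general {n : ℕ} (C : Matrix (Fin n) (Fin n) ℝ)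
    (a : ℕ → ℝ) (hapos : ∀ k, 0 < a k)
    (ha0 : Tendsto a atTop (𝓝 0))
    (hadiv : Tendsto (pSum a) atTop atTop)
    (X0 : Fin n → ℝ) (hX0 : isInteriorPt X0) :
    Tendsto (fun K => RE (wavg C a X0 K) (wavg C a X0 (K + 1))) atTop (𝓝 0) ∧
    Tendsto (fun K => Real.sqrt (∑ i, (wavg C a X0 (K + 1) i - wavg C a X0 K i) ^ 2))
      atTop (𝓝 0) := by
  have hW := wavg_isSimplex C X0 hapos hX0
  have hratio K : 0 < pSum a K / pSum a (K + 1) :=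
    div_pos (pSum_pos hapos _) (pSum_pos hapos _)
  have hstep : Tendsto (fun K => a (K + 1) / pSum a (K + 1)) atTop (𝓝 0) :=
    (ha0.div_atTop hadiv).comp (tendsto_add_atTop_nat 1)
  constructor
  · have hlog : Tendsto (fun K => -Real.log (pSum a K / pSum a (K + 1))) atTop (𝓝 0) := by
      have h1 : Tendsto (fun K => 1 - a (K + 1) / pSum a (K + 1)) atTop (𝓝 1) := by
        simpa using (tendsto_const_nhds (x := (1 : ℝ))).sub hstep
      simp_rw [pSum_div_pSum_succ hapos]
      simpa using ((Real.continuousAt_log one_ne_zero).tendsto.comp h1).neg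
    have hmix := mul_wavg_le_wavg_succ C X0 hapos hX0
    refine tendsto_of_tendsto_of_tendsto_of_le_of_le tendsto_const_nhds hlog (fun K => ?_)
      (fun K => RE_le_neg_log_of_mul_le (hW K) (hratio K) (hmix K))
    exact RE_nonneg (hW K) (hW (K + 1)) fun i hi => (mul_pos (hratio K) hi).trans_le (hmix K i)
  · have hbound : Tendsto (fun K => a (K + 1) / pSum a (K + 1) * Real.sqrt 2) atTop (𝓝 0) := by
      simpa using hstep.mul_const (Real.sqrt 2)
    exact tendsto_of_tendsto_of_tendsto_of_le_of_le tendsto_const_nhds hbound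
      (fun K => Real.sqrt_nonneg _) (sqrt_sum_sq_wavg_succ_sub_le C X0 hapos hX0)

/-- RE(X̄^K, X̄^{K+1}) → 0 and ‖X̄^{K+1} − X̄^K‖ → 0 (Euclidean norm). -/
theorem stmt18 {n : ℕ} (hn : 0 < n) (C : Matrix (Fin n) (Fin n) ℝ)
    (hC : ∀ i j, 0 ≤ C i j)
    (a : ℕ → ℝ) (hapos : ∀ k, 0 < a k)
    (ha0 : Tendsto a atTop (𝓝 0))
    (hadiv : Tendsto (pSum a) atTop atTop)
    (hasum : Summable fun k => a k * (Real.exp (a k) - 1))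
    (X0 : Fin n → ℝ) (hX0 : isInteriorPt X0) :
    Tendsto (fun K => RE (wavg C a X0 K) (wavg C a X0 (K + 1))) atTop (𝓝 0) ∧
    Tendsto (fun K => Real.sqrt (∑ i, (wavg C a X0 (K + 1) i - wavg C a X0 K i) ^ 2))
      atTop (𝓝 0) :=
  stmt18_general C a hapos ha0 hadiv X0 hX0
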